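/- arXiv:2103.13194 — 10 statements merged into one kernel-verified Lean document; each statement's English description precedes it below -/
import Mathlib

section
/- Let X ∈ ℝ^{n×n} be any symmetric matrix. For every s ∈ ℂ such that both sI_n − A and −sI_n − A are invertible (after casting A entrywise to ℂ), the Popov function satisfies the factorization G(s) + G(−s)ᵀ = [((−sI_n − A)⁻¹B)ᵀ, I_m] · W(X) · [((sI_n − A)⁻¹B)ᵀ, I_m]ᵀ, i.e., writing T(s) = [(sI_n − A)⁻¹B; I_m] ∈ ℂ^{(n+m)×m} (stacked blocks), one has G(s) + G(−s)ᵀ = T(−s)ᵀ · W(X) · T(s), where W(X) is cast entrywise to ℂ and ᵀ denotes the (non-conjugate) transpose. -/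
open Matrix

/-- The transfer function `G(s) = C (sI - A)⁻¹ B + D`, with real matrices cast to `ℂ`. -/
noncomputable def transferFun {n m p : ℕ} (A : Matrix (Fin n) (Fin n) ℝ)
    (B : Matrix (Fin n) (Fin m) ℝ) (C : Matrix (Fin p) (Fin n) ℝ)
    (D : Matrix (Fin p) (Fin m) ℝ) (s : ℂ) : Matrix (Fin p) (Fin m) ℂ :=
  C.map Complex.ofReal * (s • 1 - A.map Complex.ofReal)⁻¹ * B.map Complex.ofReal +
    D.map Complex.ofReal

/-- The KYP matrix `W(X)`. -/
def KYP {n m : ℕ} (A : Matrix (Fin n) (Fin n) ℝ) (B : Matrix (Fin n) (Fin m) ℝ)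
    (C : Matrix (Fin m) (Fin n) ℝ) (D : Matrix (Fin m) (Fin m) ℝ)
    (X : Matrix (Fin n) (Fin n) ℝ) : Matrix (Fin n ⊕ Fin m) (Fin n ⊕ Fin m) ℝ :=
  Matrix.fromBlocks (-(Aᵀ * X) - X * A) (Cᵀ - X * B) (C - Bᵀ * X) (D + Dᵀ)

/-- The stacked block matrix `T(s) = [(sI - A)⁻¹ B ; I_m]`. -/
noncomputable def stackT {n m : ℕ} (A : Matrix (Fin n) (Fin n) ℝ)
    (B : Matrix (Fin n) (Fin m) ℝ) (s : ℂ) : Matrix (Fin n ⊕ Fin m) (Fin m) ℂ :=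
  Matrix.fromRows ((s • 1 - A.map Complex.ofReal)⁻¹ * B.map Complex.ofReal) 1

/-! Since `-(AᵀX) - XA = (-sI - A)ᵀX + X(sI - A)`, each resolvent in `T(±s)` meets its inverse
inside `T(-s)ᵀ W(X) T(s)`; the `X`-terms then cancel against the off-diagonal blocks, leaving
`C(sI - A)⁻¹B + D + ((-sI - A)⁻¹B)ᵀCᵀ + Dᵀ = G(s) + G(-s)ᵀ`. -/

section CommRing

variable {R n m : Type*} [CommRing R] [Fintype n] [Fintype m] [DecidableEq n] [DecidableEq m]

theorem neg_smul_one_sub_transpose_mul_add_mul_smul_one_sub (A X : Matrix n n R) (s : R) :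
    ((-s) • 1 - A)ᵀ * X + X * (s • 1 - A) = -(Aᵀ * X) - X * A := by
  rw [transpose_sub, transpose_smul, transpose_one, Matrix.sub_mul, Matrix.mul_sub,
    Matrix.smul_mul, Matrix.mul_smul, Matrix.one_mul, Matrix.mul_one, neg_smul]
  abel

theorem transpose_fromRows_mul_fromBlocks_mul_fromRows {M N : Matrix n n R} (hM : IsUnit M)
    (hN : IsUnit N) (X : Matrix n n R) (B : Matrix n m R) (C : Matrix m n R) (D : Matrix m m R) :
    (fromRows (N⁻¹ * B) (1 : Matrix m m R))ᵀ *
        fromBlocks (Nᵀ * X + X * M) (Cᵀ - X * B) (C - Bᵀ * X) (D + Dᵀ) *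
        fromRows (M⁻¹ * B) (1 : Matrix m m R) =
      C * M⁻¹ * B + D + (C * N⁻¹ * B + D)ᵀ := by
  have hMB : M * (M⁻¹ * B) = B :=
    mul_nonsing_inv_cancel_left M B ((isUnit_iff_isUnit_det M).mp hM)
  have hNB (Y : Matrix n m R) : (N⁻¹ * B)ᵀ * (Nᵀ * Y) = Bᵀ * Y := by
    rw [← Matrix.mul_assoc, ← transpose_mul,
      mul_nonsing_inv_cancel_left N B ((isUnit_iff_isUnit_det N).mp hN)]
  rw [transpose_fromRows, fromCols_mul_fromBlocks, fromCols_mul_fromRows, Matrix.mul_assoc C,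
    Matrix.mul_assoc C, transpose_add, transpose_mul C]
  simp only [transpose_one, Matrix.one_mul, Matrix.mul_one, Matrix.add_mul, Matrix.sub_mul,
    Matrix.mul_add, Matrix.mul_sub, Matrix.mul_assoc, hMB, hNB]
  abel

end CommRing

theorem KYP_map_ofReal {n m : ℕ} (A : Matrix (Fin n) (Fin n) ℝ) (B : Matrix (Fin n) (Fin m) ℝ)
    (C : Matrix (Fin m) (Fin n) ℝ) (D : Matrix (Fin m) (Fin m) ℝ) (X : Matrix (Fin n) (Fin n) ℝ) :
    (KYP A B C D X).map Complex.ofReal =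
      fromBlocks
        (-((A.map Complex.ofReal)ᵀ * X.map Complex.ofReal) - X.map Complex.ofReal * A.map Complex.ofReal)
        ((C.map Complex.ofReal)ᵀ - X.map Complex.ofReal * B.map Complex.ofReal)
        (C.map Complex.ofReal - (B.map Complex.ofReal)ᵀ * X.map Complex.ofReal)
        (D.map Complex.ofReal + (D.map Complex.ofReal)ᵀ) := by
  have map_ofReal_mul {a b c : Type} [Fintype b] (P : Matrix a b ℝ) (Q : Matrix b c ℝ) :
      (P * Q).map Complex.ofReal = P.map Complex.ofReal * Q.map Complex.ofReal :=
    Matrix.map_mul (f := Complex.ofRealHom)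
  simp only [KYP, fromBlocks_map, Matrix.map_sub _ Complex.ofReal_sub,
    Matrix.map_add _ Complex.ofReal_add, Matrix.map_neg _ Complex.ofReal_neg, map_ofReal_mul,
    transpose_map]

theorem popov_factorization_general {n m : ℕ} (A : Matrix (Fin n) (Fin n) ℝ)
    (B : Matrix (Fin n) (Fin m) ℝ) (C : Matrix (Fin m) (Fin n) ℝ)
    (D : Matrix (Fin m) (Fin m) ℝ) (X : Matrix (Fin n) (Fin n) ℝ)
    (s : ℂ) (h1 : IsUnit (s • 1 - A.map Complex.ofReal))
    (h2 : IsUnit ((-s) • 1 - A.map Complex.ofReal)) :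
    transferFun A B C D s + (transferFun A B C D (-s))ᵀ =
      (stackT A B (-s))ᵀ * (KYP A B C D X).map Complex.ofReal * stackT A B s := by
  rw [KYP_map_ofReal, ← neg_smul_one_sub_transpose_mul_add_mul_smul_one_sub _ _ s, stackT, stackT,
    transpose_fromRows_mul_fromBlocks_mul_fromRows h1 h2, transferFun, transferFun]

/-- Factorization of the Popov function `Φ(s) = G(s) + G(-s)ᵀ` via the KYP matrix `W(X)`,
for an arbitrary symmetric matrix `X`. -/
theorem popov_factorization {n m : ℕ} (A : Matrix (Fin n) (Fin n) ℝ)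
    (B : Matrix (Fin n) (Fin m) ℝ) (C : Matrix (Fin m) (Fin n) ℝ)
    (D : Matrix (Fin m) (Fin m) ℝ) (X : Matrix (Fin n) (Fin n) ℝ) (hX : Xᵀ = X)
    (s : ℂ) (h1 : IsUnit (s • 1 - A.map Complex.ofReal))
    (h2 : IsUnit ((-s) • 1 - A.map Complex.ofReal)) :
    transferFun A B C D s + (transferFun A B C D (-s))ᵀ =
      (stackT A B (-s))ᵀ * (KYP A B C D X).map Complex.ofReal * stackT A B s :=
  popov_factorization_general A B C D X s h1 h2
end

section
/- Suppose the system is port-Hamiltonian: there exist Q, J, R ∈ ℝ^{n×n}, G₀, P ∈ ℝ^{n×m}, S, N ∈ ℝ^{m×m} with Q symmetric positive definite, Jᵀ = −J, Nᵀ = −N, the block matrix [[R, P], [Pᵀ, S]] symmetric positive semidefinite, and A = (J − R)Q, B = G₀ − P, C = (G₀ + P)ᵀQ, D = S + N. Then the KYP matrix satisfies W(Q) = 2 · [[Q, 0], [0, I_m]] · [[R, P], [Pᵀ, S]] · [[Q, 0], [0, I_m]], and consequently W(Q) is positive semidefinite; i.e., Q solves the KYP inequality W(Q) ⪰ 0.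 -/
/-!
Substituting the port-Hamiltonian data, the skew-symmetric parts `J` and `N` cancel in the
symmetrisations `-AᵀQ - QA` and `D + Dᵀ`, and `W(Q)` becomes twice the congruence of the
positive semidefinite matrix `[[R, P], [Pᵀ, S]]` by the symmetric matrix `diag(Q, I)`.
-/

open Matrix

theorem Matrix.PosSemidef.mul_mul_self_of_isHermitian {ι R : Type*} [Fintype ι] [CommRing R]
    [PartialOrder R] [StarRing R] [StarOrderedRing R] {M K : Matrix ι ι R}
    (hM : M.PosSemidef) (hK : K.IsHermitian) : (K * M * K).PosSemidef := by
  simpa only [hK.eq] using hM.mul_mul_conjTranspose_same K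

theorem KYP_portHamiltonian {n m : ℕ} {Q J R : Matrix (Fin n) (Fin n) ℝ}
    {G₀ P : Matrix (Fin n) (Fin m) ℝ} {S N : Matrix (Fin m) (Fin m) ℝ}
    (hQ : Qᵀ = Q) (hJ : Jᵀ = -J) (hN : Nᵀ = -N) (hR : Rᵀ = R) (hS : Sᵀ = S) :
    KYP ((J - R) * Q) (G₀ - P) ((G₀ + P)ᵀ * Q) (S + N) Q =
      (2 : ℝ) • (fromBlocks Q 0 0 1 * fromBlocks R P Pᵀ S * fromBlocks Q 0 0 1) := by
  have h₁₁ : -(((J - R) * Q)ᵀ * Q) - Q * ((J - R) * Q) = (2 : ℝ) • (Q * R * Q) := by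
    simp only [transpose_mul, transpose_sub, hQ, hJ, hR, two_smul, Matrix.sub_mul,
      Matrix.mul_sub]
    noncomm_ring
  have h₁₂ : ((G₀ + P)ᵀ * Q)ᵀ - Q * (G₀ - P) = (2 : ℝ) • (Q * P) := by
    simp only [transpose_mul, transpose_transpose, hQ, two_smul, Matrix.mul_sub, Matrix.mul_add]
    abel
  have h₂₁ : (G₀ + P)ᵀ * Q - (G₀ - P)ᵀ * Q = (2 : ℝ) • (Pᵀ * Q) := by
    simp only [transpose_sub, transpose_add, Matrix.sub_mul, Matrix.add_mul, two_smul]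
    abel
  have h₂₂ : S + N + (S + N)ᵀ = (2 : ℝ) • S := by
    simp only [transpose_add, hS, hN, two_smul]
    abel
  simp only [KYP, fromBlocks_multiply, fromBlocks_smul, Matrix.zero_mul, Matrix.mul_zero,
    Matrix.mul_one, Matrix.one_mul, add_zero, zero_add, h₁₁, h₁₂, h₂₁, h₂₂]

theorem pH_solves_KYP_general {n m : ℕ} (A : Matrix (Fin n) (Fin n) ℝ)
    (B : Matrix (Fin n) (Fin m) ℝ) (C : Matrix (Fin m) (Fin n) ℝ)
    (D : Matrix (Fin m) (Fin m) ℝ)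
    (Q J R : Matrix (Fin n) (Fin n) ℝ) (G₀ P : Matrix (Fin n) (Fin m) ℝ)
    (S N : Matrix (Fin m) (Fin m) ℝ)
    (hQsym : Qᵀ = Q)
    (hJ : Jᵀ = -J) (hN : Nᵀ = -N)
    (hRPS : (Matrix.fromBlocks R P Pᵀ S).PosSemidef)
    (hA : A = (J - R) * Q) (hB : B = G₀ - P) (hC : C = (G₀ + P)ᵀ * Q)
    (hD : D = S + N) :
    KYP A B C D Q =
        (2 : ℝ) • (Matrix.fromBlocks Q 0 0 1 * Matrix.fromBlocks R P Pᵀ S *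
          Matrix.fromBlocks Q 0 0 1) ∧
      (KYP A B C D Q).PosSemidef := by
  subst hA hB hC hD
  obtain ⟨hR, -, -, hS⟩ := isHermitian_fromBlocks_iff.mp hRPS.isHermitian
  have hW := KYP_portHamiltonian (G₀ := G₀) (P := P) hQsym hJ hN
    (isHermitian_iff_isSymm.mp hR) (isHermitian_iff_isSymm.mp hS)
  have hK : (fromBlocks Q 0 0 (1 : Matrix (Fin m) (Fin m) ℝ)).IsHermitian :=
    .fromBlocks (isHermitian_iff_isSymm.mpr hQsym) (by simp) isHermitian_one
  exact ⟨hW, hW ▸ (hRPS.mul_mul_self_of_isHermitian hK).smul zero_le_two⟩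

/-- For a port-Hamiltonian system, the Hamiltonian `Q` solves the KYP inequality:
`W(Q) = 2 diag(Q, I) [[R, P], [Pᵀ, S]] diag(Q, I) ⪰ 0`. -/
theorem pH_solves_KYP {n m : ℕ} (A : Matrix (Fin n) (Fin n) ℝ)
    (B : Matrix (Fin n) (Fin m) ℝ) (C : Matrix (Fin m) (Fin n) ℝ)
    (D : Matrix (Fin m) (Fin m) ℝ)
    (Q J R : Matrix (Fin n) (Fin n) ℝ) (G₀ P : Matrix (Fin n) (Fin m) ℝ)
    (S N : Matrix (Fin m) (Fin m) ℝ)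
    (hQ : Q.PosDef) (hQsym : Qᵀ = Q)
    (hJ : Jᵀ = -J) (hN : Nᵀ = -N)
    (hRPS : (Matrix.fromBlocks R P Pᵀ S).PosSemidef)
    (hA : A = (J - R) * Q) (hB : B = G₀ - P) (hC : C = (G₀ + P)ᵀ * Q)
    (hD : D = S + N) :
    KYP A B C D Q =
        (2 : ℝ) • (Matrix.fromBlocks Q 0 0 1 * Matrix.fromBlocks R P Pᵀ S *
          Matrix.fromBlocks Q 0 0 1) ∧
      (KYP A B C D Q).PosSemidef :=
  pH_solves_KYP_general A B C D Q J R G₀ P S N hQsym hJ hN hRPS hA hB hC hD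
end

section
/- Suppose X ∈ ℝ^{n×n} is symmetric positive definite and the KYP matrix W(X) is positive semidefinite. Define J := (1/2)(AX⁻¹ − X⁻¹Aᵀ), R := −(1/2)(AX⁻¹ + X⁻¹Aᵀ), G₀ := (1/2)(X⁻¹Cᵀ + B), P := (1/2)(X⁻¹Cᵀ − B), S := (1/2)(D + Dᵀ), N := (1/2)(D − Dᵀ). Then: (i) A = (J − R)X, B = G₀ − P, C = (G₀ + P)ᵀX, D = S + N; (ii) Jᵀ = −J and Nᵀ = −N; and (iii) the block matrix [[R, P], [Pᵀ, S]] is symmetric positive semidefinite. In other words, every symmetric positive definite solution of the KYP inequality yields a port-Hamiltonian representation of the system. -/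
open Matrix

/-!
Congruence with `diag(X⁻¹, 1)` turns the KYP matrix `W(X)` into `2 • [[R, P], [Pᵀ, S]]`, so
positive semidefiniteness passes from `W(X)` to the dissipation block. Everything else is an
identity in `X⁻¹`, using `X⁻¹ * X = 1` and `X⁻¹ᵀ = X⁻¹`.
-/

lemma transpose_fromBlocks_mul_fromBlocks_mul_fromBlocks {ι κ α : Type*} [Fintype ι]
    [Fintype κ] [DecidableEq ι] [DecidableEq κ] [Semiring α]
    (T M₁₁ : Matrix ι ι α) (M₁₂ : Matrix ι κ α) (M₂₁ : Matrix κ ι α) (M₂₂ : Matrix κ κ α) :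
    (fromBlocks T 0 0 1)ᵀ * fromBlocks M₁₁ M₁₂ M₂₁ M₂₂ * fromBlocks T 0 0 1 =
      fromBlocks (Tᵀ * M₁₁ * T) (Tᵀ * M₁₂) (M₂₁ * T) M₂₂ := by
  simp [fromBlocks_transpose, fromBlocks_multiply]

section KYP

variable {n m : ℕ} (A : Matrix (Fin n) (Fin n) ℝ) (B : Matrix (Fin n) (Fin m) ℝ)
  (C : Matrix (Fin m) (Fin n) ℝ) (D : Matrix (Fin m) (Fin m) ℝ) {X : Matrix (Fin n) (Fin n) ℝ}

lemma transpose_mul_KYP_mul_fromBlocks_inv (hX : IsUnit X.det) (hXsymm : Xᵀ = X) :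
    (fromBlocks X⁻¹ 0 0 1)ᵀ * KYP A B C D X * fromBlocks X⁻¹ 0 0 1 =
      fromBlocks (-(A * X⁻¹ + X⁻¹ * Aᵀ)) (X⁻¹ * Cᵀ - B) (X⁻¹ * Cᵀ - B)ᵀ (D + Dᵀ) := by
  have hXinv_symm : X⁻¹ᵀ = X⁻¹ := by rw [transpose_nonsing_inv, hXsymm]
  rw [KYP, transpose_fromBlocks_mul_fromBlocks_mul_fromBlocks, hXinv_symm]
  congr 1
  · rw [Matrix.mul_sub, Matrix.sub_mul, Matrix.mul_neg, Matrix.neg_mul, ← Matrix.mul_assoc,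
      mul_nonsing_inv_cancel_right X _ hX, nonsing_inv_mul_cancel_left X _ hX]
    abel
  · rw [Matrix.mul_sub, nonsing_inv_mul_cancel_left X _ hX]
  · rw [Matrix.sub_mul, mul_nonsing_inv_cancel_right X _ hX, transpose_sub, transpose_mul,
      hXinv_symm, transpose_transpose]

lemma posSemidef_dissipation_of_KYP (hX : IsUnit X.det) (hXsymm : Xᵀ = X)
    (hW : (KYP A B C D X).PosSemidef) :
    (fromBlocks (-(A * X⁻¹ + X⁻¹ * Aᵀ)) (X⁻¹ * Cᵀ - B) (X⁻¹ * Cᵀ - B)ᵀ (D + Dᵀ)).PosSemidef := by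
  rw [← transpose_mul_KYP_mul_fromBlocks_inv A B C D hX hXsymm,
    ← conjTranspose_eq_transpose_of_trivial]
  exact hW.conjTranspose_mul_mul_same _

end KYP

theorem KYP_solution_gives_pH_general {n m : ℕ} (A : Matrix (Fin n) (Fin n) ℝ)
    (B : Matrix (Fin n) (Fin m) ℝ) (C : Matrix (Fin m) (Fin n) ℝ)
    (D : Matrix (Fin m) (Fin m) ℝ) (X : Matrix (Fin n) (Fin n) ℝ)
    (hX : X.PosDef) (hW : (KYP A B C D X).PosSemidef) :
    let J := (1 / 2 : ℝ) • (A * X⁻¹ - X⁻¹ * Aᵀ)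
    let R := -((1 / 2 : ℝ) • (A * X⁻¹ + X⁻¹ * Aᵀ))
    let G₀ := (1 / 2 : ℝ) • (X⁻¹ * Cᵀ + B)
    let P := (1 / 2 : ℝ) • (X⁻¹ * Cᵀ - B)
    let S := (1 / 2 : ℝ) • (D + Dᵀ)
    let N := (1 / 2 : ℝ) • (D - Dᵀ)
    (A = (J - R) * X ∧ B = G₀ - P ∧ C = (G₀ + P)ᵀ * X ∧ D = S + N) ∧
      (Jᵀ = -J ∧ Nᵀ = -N) ∧
      (Matrix.fromBlocks R P Pᵀ S).PosSemidef := by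
  intro J R G₀ P S N
  have hXdet : IsUnit X.det := (isUnit_iff_isUnit_det X).mp hX.isUnit
  have hXsymm : Xᵀ = X := isHermitian_iff_isSymm.mp hX.isHermitian
  have hXinv_symm : X⁻¹ᵀ = X⁻¹ := isHermitian_iff_isSymm.mp hX.inv.isHermitian
  have hJR : J - R = A * X⁻¹ := by module
  have hGP : G₀ + P = X⁻¹ * Cᵀ := by module
  refine ⟨⟨?_, by module, ?_, by module⟩, ⟨?_, ?_⟩, ?_⟩
  · rw [hJR, nonsing_inv_mul_cancel_right X _ hXdet]
  · rw [hGP, transpose_mul, hXinv_symm, transpose_transpose,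
      nonsing_inv_mul_cancel_right X _ hXdet]
  · simp only [J, transpose_smul, transpose_sub, transpose_mul, hXinv_symm, transpose_transpose]
    module
  · simp only [N, transpose_smul, transpose_sub, transpose_transpose]
    module
  · have hblocks : fromBlocks R P Pᵀ S = (1 / 2 : ℝ) •
        fromBlocks (-(A * X⁻¹ + X⁻¹ * Aᵀ)) (X⁻¹ * Cᵀ - B) (X⁻¹ * Cᵀ - B)ᵀ (D + Dᵀ) := by
      simp only [fromBlocks_smul, R, P, S, transpose_smul, smul_neg]
    rw [hblocks]
    exact (posSemidef_dissipation_of_KYP A B C D hXdet hXsymm hW).smul (by norm_num)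

/-- Every symmetric positive definite solution of the KYP inequality yields a
port-Hamiltonian representation of the system. -/
theorem KYP_solution_gives_pH {n m : ℕ} (A : Matrix (Fin n) (Fin n) ℝ)
    (B : Matrix (Fin n) (Fin m) ℝ) (C : Matrix (Fin m) (Fin n) ℝ)
    (D : Matrix (Fin m) (Fin m) ℝ) (X : Matrix (Fin n) (Fin n) ℝ)
    (hX : X.PosDef) (hXsym : Xᵀ = X) (hW : (KYP A B C D X).PosSemidef) :
    let J := (1 / 2 : ℝ) • (A * X⁻¹ - X⁻¹ * Aᵀ)
    let R := -((1 / 2 : ℝ) • (A * X⁻¹ + X⁻¹ * Aᵀ))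
    let G₀ := (1 / 2 : ℝ) • (X⁻¹ * Cᵀ + B)
    let P := (1 / 2 : ℝ) • (X⁻¹ * Cᵀ - B)
    let S := (1 / 2 : ℝ) • (D + Dᵀ)
    let N := (1 / 2 : ℝ) • (D - Dᵀ)
    (A = (J - R) * X ∧ B = G₀ - P ∧ C = (G₀ + P)ᵀ * X ∧ D = S + N) ∧
      (Jᵀ = -J ∧ Nᵀ = -N) ∧
      (Matrix.fromBlocks R P Pᵀ S).PosSemidef :=
  KYP_solution_gives_pH_general A B C D X hX hW
end

section
/- Suppose X ∈ ℝ^{n×n} is symmetric positive semidefinite and the KYP matrix W(X) is positive semidefinite. Let u : ℝ → ℝ^m be continuous, let x : ℝ → ℝ^n be differentiable with x′(t) = A x(t) + B u(t) for all t, and set y(t) = C x(t) + D u(t). Then the storage function H(x) := (1/2) xᵀXx satisfies the dissipation inequality: for all t₀ ≤ t₁, (1/2) x(t₁)ᵀ X x(t₁) − (1/2) x(t₀)ᵀ X x(t₀) ≤ ∫_{t₀}^{t₁} y(τ)ᵀ u(τ) dτ. In particular, a solution of the KYP inequality makes the system passive. -/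
/-!
Evaluating the quadratic form of `W(X)` at the stacked vector `(x, u)` gives
`2 (C x + D u)ᵀ u - (A x + B u)ᵀ (X + Xᵀ) x`, i.e. twice the supply rate `yᵀ u` minus twice the
rate of change of `H(x) = ½ xᵀ X x` along `x' = A x + B u`. So `W(X) ⪰ 0` says pointwise that
the storage grows no faster than the supply, and the dissipation inequality follows by
integrating this comparison of derivatives.
-/

open Matrix MeasureTheory

section Calculus

variable {𝕜 : Type*} [NontriviallyNormedField 𝕜] {ι κ : Type*} [Fintype ι]
  {v w : 𝕜 → ι → 𝕜} {v' w' : ι → 𝕜} {t : 𝕜}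

theorem HasDerivAt.dotProduct (hv : HasDerivAt v v' t) (hw : HasDerivAt w w' t) :
    HasDerivAt (fun s => v s ⬝ᵥ w s) (v' ⬝ᵥ w t + v t ⬝ᵥ w') t := by
  have h := HasDerivAt.fun_sum (u := Finset.univ) fun i _ =>
    (hasDerivAt_pi.1 hv i).fun_mul (hasDerivAt_pi.1 hw i)
  rwa [Finset.sum_add_distrib] at h

theorem HasDerivAt.matrix_mulVec (M : Matrix κ ι 𝕜) (hv : HasDerivAt v v' t) :
    HasDerivAt (fun s => M *ᵥ v s) (M *ᵥ v') t :=
  hasDerivAt_pi.2 fun i => by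
    have h := (hasDerivAt_const t (M i)).dotProduct hv
    rwa [zero_dotProduct, zero_add] at h

theorem HasDerivAt.dotProduct_mulVec_self (M : Matrix ι ι 𝕜) (hv : HasDerivAt v v' t) :
    HasDerivAt (fun s => v s ⬝ᵥ M *ᵥ v s) (v' ⬝ᵥ (M + Mᵀ) *ᵥ v t) t := by
  convert hv.dotProduct (hv.matrix_mulVec M) using 1
  rw [add_mulVec, dotProduct_add, dotProduct_transpose_mulVec]

end Calculus

section KYP

variable {n m : ℕ} (A : Matrix (Fin n) (Fin n) ℝ) (B : Matrix (Fin n) (Fin m) ℝ)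
    (C : Matrix (Fin m) (Fin n) ℝ) (D : Matrix (Fin m) (Fin m) ℝ)
    (X : Matrix (Fin n) (Fin n) ℝ)

theorem sumElim_dotProduct_KYP_mulVec_sumElim (x : Fin n → ℝ) (u : Fin m → ℝ) :
    Sum.elim x u ⬝ᵥ KYP A B C D X *ᵥ Sum.elim x u =
      2 * ((C *ᵥ x + D *ᵥ u) ⬝ᵥ u) - (A *ᵥ x + B *ᵥ u) ⬝ᵥ (X + Xᵀ) *ᵥ x := by
  simp only [KYP, fromBlocks_mulVec, sumElim_dotProduct_sumElim, Sum.elim_comp_inl,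
    Sum.elim_comp_inr, add_mulVec, sub_mulVec, neg_mulVec, ← mulVec_mulVec, mulVec_add,
    dotProduct_add, dotProduct_sub, dotProduct_neg, add_dotProduct, dotProduct_transpose_mulVec]
  rw [dotProduct_comm (X *ᵥ x) (A *ᵥ x), dotProduct_comm (X *ᵥ x) (B *ᵥ u),
    dotProduct_comm u (C *ᵥ x), dotProduct_comm u (D *ᵥ u)]
  ring

variable {A B C D X} in
theorem storage_rate_le_supply_rate_of_posSemidef (hW : (KYP A B C D X).PosSemidef)
    (x : Fin n → ℝ) (u : Fin m → ℝ) :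
    (1 / 2) * ((A *ᵥ x + B *ᵥ u) ⬝ᵥ (X + Xᵀ) *ᵥ x) ≤ (C *ᵥ x + D *ᵥ u) ⬝ᵥ u := by
  have h := hW.dotProduct_mulVec_nonneg (Sum.elim x u)
  rw [star_trivial, sumElim_dotProduct_KYP_mulVec_sumElim] at h
  linarith

end KYP

theorem KYP_implies_passive_general {n m : ℕ} (A : Matrix (Fin n) (Fin n) ℝ)
    (B : Matrix (Fin n) (Fin m) ℝ) (C : Matrix (Fin m) (Fin n) ℝ)
    (D : Matrix (Fin m) (Fin m) ℝ) (X : Matrix (Fin n) (Fin n) ℝ)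
    (hW : (KYP A B C D X).PosSemidef)
    (u : ℝ → Fin m → ℝ) (x : ℝ → Fin n → ℝ) (y : ℝ → Fin m → ℝ)
    (hu : Continuous u)
    (hx : ∀ t : ℝ, HasDerivAt x (A.mulVec (x t) + B.mulVec (u t)) t)
    (hy : ∀ t : ℝ, y t = C.mulVec (x t) + D.mulVec (u t)) :
    ∀ t₀ t₁ : ℝ, t₀ ≤ t₁ →
      (1 / 2) * (x t₁ ⬝ᵥ X.mulVec (x t₁)) - (1 / 2) * (x t₀ ⬝ᵥ X.mulVec (x t₀)) ≤
        ∫ τ in t₀..t₁, y τ ⬝ᵥ u τ := by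
  intro t₀ t₁ ht
  have hx_cont : Continuous x := continuous_iff_continuousAt.2 fun t => (hx t).continuousAt
  have hyu_cont : Continuous fun τ => y τ ⬝ᵥ u τ := by
    simp only [hy]
    fun_prop
  refine intervalIntegral.sub_le_integral_of_hasDeriv_right_of_le ht
    (Continuous.continuousOn (by fun_prop))
    (fun t _ => (((hx t).dotProduct_mulVec_self X).const_mul (1 / 2)).hasDerivWithinAt)
    hyu_cont.integrableOn_Icc fun t _ => ?_
  rw [hy]
  exact storage_rate_le_supply_rate_of_posSemidef hW (x t) (u t)

/-- A positive semidefinite solution of the KYP inequality yields the quadratic storage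
function `H(x) = ½ xᵀ X x` satisfying the dissipation inequality, i.e., the system is
passive. -/
theorem KYP_implies_passive {n m : ℕ} (A : Matrix (Fin n) (Fin n) ℝ)
    (B : Matrix (Fin n) (Fin m) ℝ) (C : Matrix (Fin m) (Fin n) ℝ)
    (D : Matrix (Fin m) (Fin m) ℝ) (X : Matrix (Fin n) (Fin n) ℝ)
    (hX : X.PosSemidef) (hW : (KYP A B C D X).PosSemidef)
    (u : ℝ → Fin m → ℝ) (x : ℝ → Fin n → ℝ) (y : ℝ → Fin m → ℝ)
    (hu : Continuous u)
    (hx : ∀ t : ℝ, HasDerivAt x (A.mulVec (x t) + B.mulVec (u t)) t)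
    (hy : ∀ t : ℝ, y t = C.mulVec (x t) + D.mulVec (u t)) :
    ∀ t₀ t₁ : ℝ, t₀ ≤ t₁ →
      (1 / 2) * (x t₁ ⬝ᵥ X.mulVec (x t₁)) - (1 / 2) * (x t₀ ⬝ᵥ X.mulVec (x t₀)) ≤
        ∫ τ in t₀..t₁, y τ ⬝ᵥ u τ :=
  KYP_implies_passive_general A B C D X hW u x y hu hx hy
end

section
/- (Spectral factorization of the Popov function.) Suppose X ∈ ℝ^{n×n} is symmetric, L ∈ ℝ^{k×n}, M ∈ ℝ^{k×m}, and the KYP matrix factorizes as W(X) = [L, M]ᵀ[L, M], where [L, M] ∈ ℝ^{k×(n+m)} is the horizontal concatenation. Define the spectral factor H(s) = M + L(sI_n − A)⁻¹B. Then for every s ∈ ℂ such that both sI_n − A and −sI_n − A are invertible (entries cast to ℂ), H(−s)ᵀ H(s) = G(s) + G(−s)ᵀ, where ᵀ denotes the (non-conjugate) transpose. -/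
/-!
Writing `P = sI - A` and `Q = -sI - A`, the `(1,1)` block of the KYP matrix is the shifted
Lyapunov form `-AᵀX - XA = QᵀX + XP`. Expanding `H(-s)ᵀ H(s)` with the four blocks of
`W(X) = [L, M]ᵀ [L, M]`, the `(1,1)` block contributes `BᵀXP⁻¹B + BᵀQ⁻ᵀXB`, and these two terms
cancel against the `X`-terms of the off-diagonal blocks, leaving `CP⁻¹B + BᵀQ⁻ᵀCᵀ + D + Dᵀ`.
This is pure algebra, valid over any commutative ring.
-/

open Matrix

section

variable {R : Type*} [CommRing R] {ι κ μ : Type*} [Fintype ι] [DecidableEq ι] [Fintype κ]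

theorem neg_transpose_mul_sub_mul_eq (a x : Matrix ι ι R) (s : R) :
    -(aᵀ * x) - x * a = ((-s) • 1 - a)ᵀ * x + x * (s • 1 - a) := by
  rw [transpose_sub, transpose_smul, transpose_one]
  simp only [Matrix.sub_mul, Matrix.mul_sub, Matrix.smul_mul, Matrix.mul_smul, Matrix.one_mul,
    Matrix.mul_one, neg_smul, Matrix.neg_mul]
  abel

theorem popov_identity_of_blocks {x P Q : Matrix ι ι R} {b : Matrix ι μ R} {c : Matrix μ ι R}
    {d : Matrix μ μ R} {l : Matrix κ ι R} {m : Matrix κ μ R}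
    (hP : IsUnit P.det) (hQ : IsUnit Q.det) (hll : lᵀ * l = Qᵀ * x + x * P)
    (hlm : lᵀ * m = cᵀ - x * b) (hml : mᵀ * l = c - bᵀ * x) (hmm : mᵀ * m = d + dᵀ) :
    (l * Q⁻¹ * b + m)ᵀ * (l * P⁻¹ * b + m) = c * P⁻¹ * b + d + (c * Q⁻¹ * b + d)ᵀ := by
  have hQt : IsUnit Qᵀ.det := by rwa [det_transpose]
  have expand : (l * Q⁻¹ * b + m)ᵀ * (l * P⁻¹ * b + m) =
      bᵀ * Qᵀ⁻¹ * (lᵀ * l) * P⁻¹ * b + bᵀ * Qᵀ⁻¹ * (lᵀ * m) + mᵀ * l * P⁻¹ * b +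
        mᵀ * m := by
    simp only [transpose_add, transpose_mul, transpose_nonsing_inv, Matrix.mul_add,
      Matrix.add_mul, Matrix.mul_assoc]
    abel
  rw [expand, hll, hlm, hml, hmm, transpose_add, transpose_mul, transpose_mul,
    transpose_nonsing_inv]
  simp only [Matrix.mul_add, Matrix.add_mul, Matrix.mul_sub, Matrix.sub_mul, ← Matrix.mul_assoc,
    nonsing_inv_mul_cancel_right _ _ hQt, mul_nonsing_inv_cancel_right _ _ hP]
  abel

theorem popov_identity_of_kyp_factorization [Fintype μ] {a x : Matrix ι ι R}
    {b : Matrix ι μ R} {c : Matrix μ ι R} {d : Matrix μ μ R} {l : Matrix κ ι R}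
    {m : Matrix κ μ R} (s : R) (hP : IsUnit (s • 1 - a)) (hQ : IsUnit ((-s) • 1 - a))
    (hfac : fromBlocks (-(aᵀ * x) - x * a) (cᵀ - x * b) (c - bᵀ * x) (d + dᵀ) =
      (fromCols l m)ᵀ * fromCols l m) :
    (l * ((-s) • 1 - a)⁻¹ * b + m)ᵀ * (l * (s • 1 - a)⁻¹ * b + m) =
      c * (s • 1 - a)⁻¹ * b + d + (c * ((-s) • 1 - a)⁻¹ * b + d)ᵀ := by
  rw [transpose_fromCols, fromRows_mul_fromCols, fromBlocks_inj] at hfac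
  obtain ⟨hll, hlm, hml, hmm⟩ := hfac
  rw [neg_transpose_mul_sub_mul_eq a x s] at hll
  exact popov_identity_of_blocks ((isUnit_iff_isUnit_det _).mp hP)
    ((isUnit_iff_isUnit_det _).mp hQ) hll.symm hlm.symm hml.symm hmm.symm

end

theorem spectral_factorization_general {n m k : ℕ} (A : Matrix (Fin n) (Fin n) ℝ)
    (B : Matrix (Fin n) (Fin m) ℝ) (C : Matrix (Fin m) (Fin n) ℝ)
    (D : Matrix (Fin m) (Fin m) ℝ) (X : Matrix (Fin n) (Fin n) ℝ)
    (L : Matrix (Fin k) (Fin n) ℝ) (M : Matrix (Fin k) (Fin m) ℝ)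
    (hfac : KYP A B C D X = (Matrix.fromCols L M)ᵀ * Matrix.fromCols L M) :
    ∀ s : ℂ, IsUnit (s • 1 - A.map Complex.ofReal) →
      IsUnit ((-s) • 1 - A.map Complex.ofReal) →
      (transferFun A B L M (-s))ᵀ * transferFun A B L M s =
        transferFun A B C D s + (transferFun A B C D (-s))ᵀ := by
  intro s hP hQ
  have hfacℂ := congrArg (Matrix.map · Complex.ofRealHom) hfac
  simp only [KYP, fromBlocks_map, fromCols_map, Matrix.map_mul, transpose_map,
    Matrix.map_sub _ (map_sub _), Matrix.map_add _ (map_add _),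
    Matrix.map_neg _ (map_neg Complex.ofRealHom)] at hfacℂ
  exact popov_identity_of_kyp_factorization s hP hQ hfacℂ

/-- Spectral factorization of the Popov function: if `W(X) = [L, M]ᵀ [L, M]`, then the
spectral factor `H(s) = M + L (sI - A)⁻¹ B` satisfies `H(-s)ᵀ H(s) = G(s) + G(-s)ᵀ`. -/
theorem spectral_factorization {n m k : ℕ} (A : Matrix (Fin n) (Fin n) ℝ)
    (B : Matrix (Fin n) (Fin m) ℝ) (C : Matrix (Fin m) (Fin n) ℝ)
    (D : Matrix (Fin m) (Fin m) ℝ) (X : Matrix (Fin n) (Fin n) ℝ)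
    (L : Matrix (Fin k) (Fin n) ℝ) (M : Matrix (Fin k) (Fin m) ℝ)
    (hXsym : Xᵀ = X)
    (hfac : KYP A B C D X = (Matrix.fromCols L M)ᵀ * Matrix.fromCols L M) :
    ∀ s : ℂ, IsUnit (s • 1 - A.map Complex.ofReal) →
      IsUnit ((-s) • 1 - A.map Complex.ofReal) →
      (transferFun A B L M (-s))ᵀ * transferFun A B L M s =
        transferFun A B C D s + (transferFun A B C D (-s))ᵀ :=
  spectral_factorization_general A B C D X L M hfac
end

section
/- (Algebraic core of Theorem 3.3: the reduced-order model satisfies a positive real Lur'e equation.) Let Ã ∈ ℝ^{r×r}, B̃ ∈ ℝ^{r×m}, L̃ ∈ ℝ^{k×r}, M̃ ∈ ℝ^{k×m}, and let X̃ ∈ ℝ^{r×r} be symmetric with ÃᵀX̃ + X̃Ã + L̃ᵀL̃ = 0. Let N ∈ ℝ^{m×m} satisfy Nᵀ = −N, and define C̃ := B̃ᵀX̃ + M̃ᵀL̃ and D̃ := (1/2)M̃ᵀM̃ + N. Then the KYP matrix of (Ã, B̃, C̃, D̃) at X̃ satisfies W̃(X̃) = [[−ÃᵀX̃ − X̃Ã,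 C̃ᵀ − X̃B̃], [C̃ − B̃ᵀX̃, D̃ + D̃ᵀ]] = [L̃, M̃]ᵀ[L̃, M̃], and in particular W̃(X̃) is positive semidefinite, so X̃ solves the KYP inequality of the reduced system. -/
open Matrix

/-! The Lyapunov equation turns the upper-left block into `L̃ᵀL̃`, the choice of `C̃` makes the
off-diagonal blocks `L̃ᵀM̃` and `M̃ᵀL̃` (using `X̃ᵀ = X̃`), and the skew part `N` cancels in
`D̃ + D̃ᵀ = M̃ᵀM̃`. Hence `W̃(X̃)` is the Gram matrix of `[L̃, M̃]`, which is positive semidefinite. -/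

namespace Matrix

variable {R ι μ κ : Type*}

section CommRing

variable [CommRing R] [Fintype ι]

def kypMatrix (A : Matrix ι ι R) (B : Matrix ι μ R) (C : Matrix μ ι R) (D : Matrix μ μ R)
    (X : Matrix ι ι R) : Matrix (ι ⊕ μ) (ι ⊕ μ) R :=
  fromBlocks (-(Aᵀ * X) - X * A) (Cᵀ - X * B) (C - Bᵀ * X) (D + Dᵀ)

theorem kypMatrix_eq_transpose_mul_fromCols [Fintype κ] {A X : Matrix ι ι R} {B : Matrix ι μ R}
    {D : Matrix μ μ R} {L : Matrix κ ι R} {M : Matrix κ μ R} (hX : Xᵀ = X)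
    (hLyap : Aᵀ * X + X * A + Lᵀ * L = 0) (hD : D + Dᵀ = Mᵀ * M) :
    kypMatrix A B (Bᵀ * X + Mᵀ * L) D X = (fromCols L M)ᵀ * fromCols L M := by
  have h₁₁ : -(Aᵀ * X) - X * A = Lᵀ * L := by
    rw [eq_neg_of_add_eq_zero_right hLyap]; abel
  have h₁₂ : (Bᵀ * X + Mᵀ * L)ᵀ - X * B = Lᵀ * M := by
    simp only [transpose_add, transpose_mul, transpose_transpose, hX]; abel
  have h₂₁ : Bᵀ * X + Mᵀ * L - Bᵀ * X = Mᵀ * L := add_sub_cancel_left _ _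
  rw [kypMatrix, transpose_fromCols, fromRows_mul_fromCols, h₁₁, h₁₂, h₂₁, hD]

end CommRing

theorem half_smul_add_add_transpose [DivisionRing R] [NeZero (2 : R)] {S N : Matrix μ μ R}
    (hS : Sᵀ = S) (hN : Nᵀ = -N) :
    ((1 / 2 : R) • S + N) + ((1 / 2 : R) • S + N)ᵀ = S := by
  rw [transpose_add, transpose_smul, hS, hN, add_add_add_comm, add_neg_cancel, add_zero,
    ← add_smul, add_halves, one_smul]

end Matrix

/-- Algebraic core of Theorem 3.3: the reduced-order model produced by the spectral-factor
algorithm satisfies a positive real Lur'e equation, i.e., its KYP matrix factorizes as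
`[L̃, M̃]ᵀ [L̃, M̃]` and is in particular positive semidefinite. -/
theorem rom_satisfies_lure {r m k : ℕ} (At : Matrix (Fin r) (Fin r) ℝ)
    (Bt : Matrix (Fin r) (Fin m) ℝ) (Lt : Matrix (Fin k) (Fin r) ℝ)
    (Mt : Matrix (Fin k) (Fin m) ℝ) (Xt : Matrix (Fin r) (Fin r) ℝ)
    (N : Matrix (Fin m) (Fin m) ℝ)
    (hXtsym : Xtᵀ = Xt) (hLyap : Atᵀ * Xt + Xt * At + Ltᵀ * Lt = 0)
    (hN : Nᵀ = -N) :
    let Ct := Btᵀ * Xt + Mtᵀ * Lt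
    let Dt := (1 / 2 : ℝ) • (Mtᵀ * Mt) + N
    Matrix.fromBlocks (-(Atᵀ * Xt) - Xt * At) (Ctᵀ - Xt * Bt) (Ct - Btᵀ * Xt)
        (Dt + Dtᵀ) =
        (Matrix.fromCols Lt Mt)ᵀ * Matrix.fromCols Lt Mt ∧
      (Matrix.fromBlocks (-(Atᵀ * Xt) - Xt * At) (Ctᵀ - Xt * Bt) (Ct - Btᵀ * Xt)
        (Dt + Dtᵀ)).PosSemidef := by
  intro Ct Dt
  have hMtMt : (Mtᵀ * Mt)ᵀ = Mtᵀ * Mt := by rw [transpose_mul, transpose_transpose]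
  have hW : kypMatrix At Bt Ct Dt Xt = (fromCols Lt Mt)ᵀ * fromCols Lt Mt :=
    kypMatrix_eq_transpose_mul_fromCols hXtsym hLyap (half_smul_add_add_transpose hMtMt hN)
  show kypMatrix At Bt Ct Dt Xt = _ ∧ (kypMatrix At Bt Ct Dt Xt).PosSemidef
  rw [hW, ← conjTranspose_eq_transpose_of_trivial]
  exact ⟨rfl, posSemidef_conjTranspose_mul_self _⟩
end

section
/- (Theorem 3.5: the minimal KYP solution yields the spectral factor with smallest Hankel singular values.) Let A ∈ ℝ^{n×n} have all eigenvalues with negative real part, let B ∈ ℝ^{n×m}, and let P ∈ ℝ^{n×n} be symmetric positive definite with AP + PAᵀ + BBᵀ = 0 and Cholesky-type factorization P = FFᵀ with F ∈ ℝ^{n×n} invertible. Let L ∈ ℝ^{k×n} and L̂ ∈ ℝ^{k̂×n}, and let X, X̂ ∈ ℝ^{n×n} be symmetric with AᵀX + XA + LᵀL = 0 and AᵀX̂ + X̂A + L̂ᵀL̂ = 0, and assume X ≤ X̂ (i.e., X̂ − X is positive semidefinite). Then: (i) F⁻¹(PX)F = FᵀXF and F⁻¹(PX̂)F = FᵀX̂F,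 so the eigenvalues of PX and PX̂ are the (real, nonnegative) eigenvalues of the symmetric matrices FᵀXF and FᵀX̂F; and (ii) for every index 1 ≤ j ≤ n, the j-th largest eigenvalue of FᵀXF is less than or equal to the j-th largest eigenvalue of FᵀX̂F. Consequently, the j-th Hankel singular value σ_j = √(λ_j(PX)) of the spectral factor (A, B, L, ·) is at most the j-th Hankel singular value of the spectral factor (A, B, L̂, ·). -/
open Matrix

open Classical in
/-- The eigenvalues of a real symmetric matrix listed in decreasing order
(`eigsDesc S j` is the `(j+1)`-th largest eigenvalue); junk value `0` if `S` is not
symmetric. -/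
noncomputable def eigsDesc {n : ℕ} (S : Matrix (Fin n) (Fin n) ℝ) : Fin n → ℝ :=
  if h : S.IsHermitian then fun j => (h.eigenvalues ∘ Tuple.sort h.eigenvalues) j.rev
  else 0

/-!
Conjugation by `F` turns `P X = F Fᵀ X` into the symmetric matrix `Fᵀ X F`, and `X ≤ X̂` gives
`Fᵀ X F ≤ Fᵀ X̂ F`. Two facts then finish the proof.

The observability Gramian `X` is positive semidefinite. Since `A` is stable, its Cayley transform
`D = (A + 1)(A - 1)⁻¹` has spectrum inside the unit disc, so `Dᴷ → 0` by Gelfand's formula, while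
the Lyapunov equation becomes `X - Dᵀ X D = 2 Gᵀ Lᵀ L G ≥ 0` with `G = (A - 1)⁻¹`. Hence the
quadratic form of `X` decreases along `x, D x, D² x, …`, which tends to `0`, so it is nonnegative.

Eigenvalues are monotone (Weyl): if `S ≤ T`, the span of the eigenvectors of `S` belonging to its
`n - i` largest eigenvalues meets the span of the eigenvectors of `T` belonging to its `i + 1`
smallest ones, and on a common unit vector `v` we get `λ↑ᵢ(S) ≤ vᵀ S v ≤ vᵀ T v ≤ λ↑ᵢ(T)`.
-/

open Filter Topology
open scoped RealInnerProductSpace InnerProductSpace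

theorem exists_ne_zero_forall_inner_eq_zero {𝕜 E ι : Type*} [RCLike 𝕜] [NormedAddCommGroup E]
    [InnerProductSpace 𝕜 E] [FiniteDimensional 𝕜 E] [Fintype ι] (u : ι → E)
    (h : Fintype.card ι < Module.finrank 𝕜 E) : ∃ v ≠ 0, ∀ i, ⟪u i, v⟫_𝕜 = 0 := by
  let f : E →ₗ[𝕜] ι → 𝕜 := LinearMap.pi fun i => (innerSL 𝕜 (u i)).toLinearMap
  obtain ⟨v, hv, hv0⟩ := Submodule.exists_mem_ne_zero_of_ne_bot
    (LinearMap.ker_ne_bot_of_finrank_lt (f := f) (by simpa using h))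
  exact ⟨v, hv0, fun i => congrFun (LinearMap.mem_ker.mp hv) i⟩

namespace Matrix.IsHermitian

variable {ι : Type*} [Fintype ι] [DecidableEq ι] {S : Matrix ι ι ℝ}

theorem dotProduct_mulVec_eq_sum (hS : S.IsHermitian) (v : EuclideanSpace ℝ ι) :
    ⇑v ⬝ᵥ S *ᵥ ⇑v = ∑ j, hS.eigenvalues j * ⟪hS.eigenvectorBasis j, v⟫ ^ 2 := by
  set b := hS.eigenvectorBasis
  have hb : ∀ j, ⟪WithLp.toLp 2 (S *ᵥ ⇑v), b j⟫ = hS.eigenvalues j * ⟪b j, v⟫ := fun j => by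
    simp only [EuclideanSpace.inner_eq_star_dotProduct, star_trivial]
    rw [dotProduct_mulVec, ← mulVec_transpose, (isHermitian_iff_isSymm.mp hS).eq,
      hS.mulVec_eigenvectorBasis, smul_dotProduct, smul_eq_mul, dotProduct_comm]
  calc ⇑v ⬝ᵥ S *ᵥ ⇑v = ⟪WithLp.toLp 2 (S *ᵥ ⇑v), v⟫ := by
        rw [EuclideanSpace.inner_eq_star_dotProduct, star_trivial]
    _ = ∑ j, hS.eigenvalues j * ⟪b j, v⟫ * ⟪b j, v⟫ := by
        rw [← b.sum_inner_mul_inner]; simp only [hb]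
    _ = _ := by simp only [sq, mul_assoc]

theorem mul_norm_sq_le_dotProduct_mulVec (hS : S.IsHermitian) {c : ℝ} {v : EuclideanSpace ℝ ι}
    (h : ∀ j, c ≤ hS.eigenvalues j ∨ ⟪hS.eigenvectorBasis j, v⟫ = 0) :
    c * ‖v‖ ^ 2 ≤ ⇑v ⬝ᵥ S *ᵥ ⇑v := by
  rw [hS.dotProduct_mulVec_eq_sum, ← hS.eigenvectorBasis.sum_sq_inner_right, Finset.mul_sum]
  refine Finset.sum_le_sum fun j _ => ?_
  rcases h j with h | h
  · exact mul_le_mul_of_nonneg_right h (sq_nonneg _)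
  · simp [h]

theorem dotProduct_mulVec_le_mul_norm_sq (hS : S.IsHermitian) {c : ℝ} {v : EuclideanSpace ℝ ι}
    (h : ∀ j, hS.eigenvalues j ≤ c ∨ ⟪hS.eigenvectorBasis j, v⟫ = 0) :
    ⇑v ⬝ᵥ S *ᵥ ⇑v ≤ c * ‖v‖ ^ 2 := by
  rw [hS.dotProduct_mulVec_eq_sum, ← hS.eigenvectorBasis.sum_sq_inner_right, Finset.mul_sum]
  refine Finset.sum_le_sum fun j _ => ?_
  rcases h j with h | h
  · exact mul_le_mul_of_nonneg_right h (sq_nonneg _)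
  · simp [h]

theorem eigenvalues_sort_le {n : ℕ} {S T : Matrix (Fin n) (Fin n) ℝ}
    (hS : S.IsHermitian) (hT : T.IsHermitian) (hST : (T - S).PosSemidef) (i : Fin n) :
    hS.eigenvalues (Tuple.sort hS.eigenvalues i) ≤
      hT.eigenvalues (Tuple.sort hT.eigenvalues i) := by
  set p := Tuple.sort hS.eigenvalues
  set q := Tuple.sort hT.eigenvalues
  obtain ⟨v, hv0, hv⟩ := exists_ne_zero_forall_inner_eq_zero (𝕜 := ℝ)
    (fun l : {l : Fin n // l ≠ i} =>
      if l.1 < i then hS.eigenvectorBasis (p l) else hT.eigenvectorBasis (q l))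
    (by simpa using i.pos)
  have hlow : hS.eigenvalues (p i) * ‖v‖ ^ 2 ≤ ⇑v ⬝ᵥ S *ᵥ ⇑v := by
    refine hS.mul_norm_sq_le_dotProduct_mulVec fun j => ?_
    obtain ⟨l, rfl⟩ := p.surjective j
    rcases lt_or_ge l i with hl | hl
    · exact .inr (by simpa [hl] using hv ⟨l, hl.ne⟩)
    · exact .inl (Tuple.monotone_sort hS.eigenvalues hl)
  have hupp : ⇑v ⬝ᵥ T *ᵥ ⇑v ≤ hT.eigenvalues (q i) * ‖v‖ ^ 2 := by
    refine hT.dotProduct_mulVec_le_mul_norm_sq fun j => ?_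
    obtain ⟨l, rfl⟩ := q.surjective j
    rcases le_or_gt l i with hl | hl
    · exact .inl (Tuple.monotone_sort hT.eigenvalues hl)
    · exact .inr (by simpa [hl.not_gt] using hv ⟨l, hl.ne'⟩)
  have hmid : ⇑v ⬝ᵥ S *ᵥ ⇑v ≤ ⇑v ⬝ᵥ T *ᵥ ⇑v := by
    have := hST.dotProduct_mulVec_nonneg ⇑v
    rw [star_trivial, sub_mulVec, dotProduct_sub] at this
    linarith
  exact le_of_mul_le_mul_right (hlow.trans (hmid.trans hupp)) (by positivity)

end Matrix.IsHermitian

theorem eigsDesc_eq {n : ℕ} {S : Matrix (Fin n) (Fin n) ℝ} (hS : S.IsHermitian) (j : Fin n) :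
    eigsDesc S j = hS.eigenvalues (Tuple.sort hS.eigenvalues j.rev) := by
  rw [eigsDesc, dif_pos hS]
  rfl

theorem eigsDesc_nonneg {n : ℕ} {S : Matrix (Fin n) (Fin n) ℝ} (hS : S.PosSemidef) (j : Fin n) :
    0 ≤ eigsDesc S j := by
  rw [eigsDesc_eq hS.1]
  exact hS.eigenvalues_nonneg _

theorem eigsDesc_le_eigsDesc_of_posSemidef_sub {n : ℕ} {S T : Matrix (Fin n) (Fin n) ℝ}
    (hS : S.IsHermitian) (hST : (T - S).PosSemidef) (j : Fin n) :
    eigsDesc S j ≤ eigsDesc T j := by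
  have hT : T.IsHermitian := by simpa using hS.add hST.1
  rw [eigsDesc_eq hS, eigsDesc_eq hT]
  exact hS.eigenvalues_sort_le hT hST j.rev

theorem spectrum.tendsto_pow_atTop_nhds_zero {A : Type*} [NormedRing A] [NormedAlgebra ℂ A]
    [CompleteSpace A] {a : A} (h : ∀ μ ∈ spectrum ℂ a, ‖μ‖ < 1) :
    Tendsto (a ^ ·) atTop (𝓝 0) := by
  nontriviality A
  obtain ⟨r, hρr, hr1⟩ := ENNReal.lt_iff_exists_nnreal_btwn.mp
    (spectrum.spectralRadius_lt_of_forall_lt a (r := 1) fun z hz => by exact_mod_cast h z hz)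
  rw [tendsto_zero_iff_norm_tendsto_zero]
  refine squeeze_zero' (.of_forall fun K => norm_nonneg _) ?_
    (tendsto_pow_atTop_nhds_zero_of_lt_one r.coe_nonneg (by exact_mod_cast hr1))
  filter_upwards [(pow_norm_pow_one_div_tendsto_nhds_spectralRadius a).eventually_lt_const hρr,
    eventually_ne_atTop 0] with K hK hK0
  rw [ENNReal.ofReal_lt_iff_lt_toReal (by positivity) ENNReal.coe_ne_top, ENNReal.coe_toReal,
    one_div] at hK
  calc ‖a ^ K‖ = (‖a ^ K‖ ^ (K⁻¹ : ℝ)) ^ K :=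
        (Real.rpow_inv_natCast_pow (norm_nonneg _) hK0).symm
    _ ≤ r ^ K := pow_le_pow_left₀ (by positivity) hK.le K

theorem Complex.norm_lt_one_of_re_div_sub_one_neg {μ : ℂ} (h : ((μ + 1) / (μ - 1)).re < 0) :
    ‖μ‖ < 1 := by
  have hN : 0 ≤ Complex.normSq (μ - 1) := Complex.normSq_nonneg _
  rw [Complex.div_re, ← add_div] at h
  have hnum : (μ + 1).re * (μ - 1).re + (μ + 1).im * (μ - 1).im < 0 := by
    by_contra! hge
    exact h.not_ge (div_nonneg hge hN)
  simp only [Complex.add_re, Complex.sub_re, Complex.one_re, Complex.add_im, Complex.sub_im,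
    Complex.one_im, sub_zero, add_zero] at hnum
  rw [← sq_lt_one_iff₀ (norm_nonneg μ), Complex.sq_norm, Complex.normSq_apply]
  nlinarith

theorem spectrum.isUnit_sub_one_of_forall_re_neg {R : Type*} [Ring R] [Algebra ℂ R] {a : R}
    (ha : ∀ μ ∈ spectrum ℂ a, μ.re < 0) : IsUnit (a - 1) := by
  have h1 : (1 : ℂ) ∉ spectrum ℂ a := fun h => absurd (ha 1 h) (by norm_num)
  rwa [spectrum.notMem_iff, map_one, ← IsUnit.neg_iff, neg_sub] at h1

theorem spectrum.norm_lt_one_of_mul_sub_one_eq_add_one {R : Type*} [Ring R] [Algebra ℂ R]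
    {a d : R} (ha : ∀ μ ∈ spectrum ℂ a, μ.re < 0) (hd : d * (a - 1) = a + 1) :
    ∀ μ ∈ spectrum ℂ d, ‖μ‖ < 1 := by
  intro μ hμ
  rw [spectrum.mem_iff, ← (spectrum.isUnit_sub_one_of_forall_re_neg ha).mul_right_iff] at hμ
  have hfac : (algebraMap ℂ R μ - d) * (a - 1) = (μ - 1) • a - (μ + 1) • 1 := by
    rw [sub_mul, hd, Algebra.algebraMap_eq_smul_one, smul_mul_assoc, one_mul]
    module
  have hμ1 : μ ≠ 1 := by
    rintro rfl
    refine hμ ?_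
    rw [hfac, show ((1 : ℂ) - 1) • a - ((1 : ℂ) + 1) • (1 : R) = algebraMap ℂ R (-2) by
      rw [Algebra.algebraMap_eq_smul_one]; module]
    exact (isUnit_iff_ne_zero.mpr (by norm_num)).map _
  -- `μ` is the Cayley transform of `(μ + 1) / (μ - 1)`, which must lie in the spectrum of `a`
  refine Complex.norm_lt_one_of_re_div_sub_one_neg (ha _ fun hlam => hμ ?_)
  rw [hfac, show (μ - 1) • a - (μ + 1) • (1 : R) =
      algebraMap ℂ R (1 - μ) * (algebraMap ℂ R ((μ + 1) / (μ - 1)) - a) by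
    rw [Algebra.algebraMap_eq_smul_one, Algebra.algebraMap_eq_smul_one, smul_mul_assoc, one_mul,
      smul_sub, smul_smul, show (1 - μ) * ((μ + 1) / (μ - 1)) = -(μ + 1) by
        field_simp [sub_ne_zero.mpr hμ1]; ring]
    module]
  exact ((isUnit_iff_ne_zero.mpr (sub_ne_zero.mpr hμ1.symm)).map _).mul hlam

theorem Matrix.isUnit_of_isUnit_map {ι K L : Type*} [Fintype ι] [DecidableEq ι] [Field K]
    [CommRing L] [Nontrivial L] (f : K →+* L) {M : Matrix ι ι K} (h : IsUnit (M.map f)) :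
    IsUnit M := by
  rw [isUnit_iff_isUnit_det] at h ⊢
  rwa [← RingHom.mapMatrix_apply, ← RingHom.map_det, isUnit_map_iff] at h

section

-- Any complete algebra norm on complex matrices would do: it induces the usual topology.
attribute [local instance] Matrix.linftyOpNormedRing Matrix.linftyOpNormedAlgebra

theorem Matrix.tendsto_pow_atTop_nhds_zero_of_map_ofReal {ι : Type*} [Fintype ι] [DecidableEq ι]
    {D : Matrix ι ι ℝ} (h : ∀ μ ∈ spectrum ℂ (D.map Complex.ofReal), ‖μ‖ < 1) :
    Tendsto (fun K : ℕ => D ^ K) atTop (𝓝 0) := by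
  have hre : Continuous fun M : Matrix ι ι ℂ => M.map Complex.re :=
    continuous_id.matrix_map Complex.continuous_re
  have hpow : ∀ K : ℕ, (D.map Complex.ofReal ^ K).map Complex.re = D ^ K := fun K => by
    rw [show D.map Complex.ofReal = Complex.ofRealHom.mapMatrix D from rfl, ← map_pow,
      RingHom.mapMatrix_apply, Matrix.map_map]
    exact Matrix.ext fun i j => Complex.ofReal_re _
  simpa [Function.comp_def, hpow] using
    (hre.tendsto 0).comp (spectrum.tendsto_pow_atTop_nhds_zero h)

end

theorem Matrix.PosSemidef.of_sub_transpose_mul_mul {ι : Type*} [Fintype ι] [DecidableEq ι]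
    {X D : Matrix ι ι ℝ} (hX : X.IsHermitian) (hD : Tendsto (fun K : ℕ => D ^ K) atTop (𝓝 0))
    (h : (X - Dᵀ * X * D).PosSemidef) : X.PosSemidef := by
  refine .of_dotProduct_mulVec_nonneg hX fun x => ?_
  set q : (ι → ℝ) → ℝ := fun y => y ⬝ᵥ X *ᵥ y
  have hstep : ∀ y, q (D *ᵥ y) ≤ q y := fun y => by
    have hconj : y ⬝ᵥ (Dᵀ * X * D) *ᵥ y = q (D *ᵥ y) := by
      simp only [q, ← mulVec_mulVec, dotProduct_mulVec y Dᵀ, vecMul_transpose]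
    have := h.dotProduct_mulVec_nonneg y
    rwa [star_trivial, sub_mulVec, dotProduct_sub, hconj, sub_nonneg] at this
  have hiter : ∀ K, q ((D ^ K) *ᵥ x) ≤ q x := fun K => by
    induction K with
    | zero => simp
    | succ K ih => rw [pow_succ', ← mulVec_mulVec]; exact (hstep _).trans ih
  have hcont : Continuous fun M : Matrix ι ι ℝ => q (M *ᵥ x) :=
    (continuous_id.matrix_mulVec continuous_const).dotProduct
      (continuous_const.matrix_mulVec (continuous_id.matrix_mulVec continuous_const))
  have hlim : Tendsto (fun K => q ((D ^ K) *ᵥ x)) atTop (𝓝 0) := by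
    simpa [q, Function.comp_def] using (hcont.tendsto 0).comp hD
  simpa using le_of_tendsto' hlim hiter

theorem Matrix.sub_transpose_mul_mul_cayley {ι R : Type*} [Fintype ι] [DecidableEq ι] [CommRing R]
    {A G X : Matrix ι ι R} (hG : (A - 1) * G = 1) :
    X - ((A + 1) * G)ᵀ * X * ((A + 1) * G) =
      Gᵀ * (-(Aᵀ * X + X * A) + -(Aᵀ * X + X * A)) * G := by
  have hX : X = ((A - 1) * G)ᵀ * X * ((A - 1) * G) := by
    rw [hG, transpose_one, one_mul, mul_one]
  nth_rewrite 1 [hX]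
  simp only [transpose_mul, transpose_sub, transpose_add, transpose_one]
  noncomm_ring

theorem Matrix.PosSemidef.of_lyapunov {ι : Type*} [Fintype ι] [DecidableEq ι]
    {A X : Matrix ι ι ℝ} (hA : ∀ μ ∈ spectrum ℂ (A.map Complex.ofReal), μ.re < 0)
    (hX : X.IsHermitian) (h : (-(Aᵀ * X + X * A)).PosSemidef) : X.PosSemidef := by
  set φ : Matrix ι ι ℝ →+* Matrix ι ι ℂ := Complex.ofRealHom.mapMatrix
  have hu : IsUnit (A - 1).det := (isUnit_iff_isUnit_det _).mp <|
    isUnit_of_isUnit_map Complex.ofRealHom <| by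
      have := spectrum.isUnit_sub_one_of_forall_re_neg hA
      rwa [show A.map Complex.ofReal = φ A from rfl, ← map_one φ, ← map_sub] at this
  set G := (A - 1)⁻¹
  set D := (A + 1) * G
  have hDA : φ D * (φ A - 1) = φ A + 1 := by
    rw [← map_one φ, ← map_sub, ← map_mul, ← map_add, mul_assoc, nonsing_inv_mul _ hu, mul_one]
  have hD : Tendsto (fun K : ℕ => D ^ K) atTop (𝓝 0) :=
    tendsto_pow_atTop_nhds_zero_of_map_ofReal
      (spectrum.norm_lt_one_of_mul_sub_one_eq_add_one hA hDA)
  refine .of_sub_transpose_mul_mul hX hD ?_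
  rw [sub_transpose_mul_mul_cayley (mul_nonsing_inv _ hu)]
  simpa using (h.add h).conjTranspose_mul_mul_same G

theorem hankel_singular_values_minimal_solution_general {n k : ℕ}
    (A : Matrix (Fin n) (Fin n) ℝ)
    (L : Matrix (Fin k) (Fin n) ℝ)
    (P F X Xh : Matrix (Fin n) (Fin n) ℝ)
    (hstab : ∀ μ ∈ spectrum ℂ (A.map Complex.ofReal), μ.re < 0)
    (hPF : P = F * Fᵀ) (hF : IsUnit F)
    (hXsym : Xᵀ = X)
    (hXLyap : Aᵀ * X + X * A + Lᵀ * L = 0)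
    (hle : (Xh - X).PosSemidef) :
    (F⁻¹ * (P * X) * F = Fᵀ * X * F ∧ F⁻¹ * (P * Xh) * F = Fᵀ * Xh * F) ∧
      (∀ j : Fin n,
        0 ≤ eigsDesc (Fᵀ * X * F) j ∧
        eigsDesc (Fᵀ * X * F) j ≤ eigsDesc (Fᵀ * Xh * F) j ∧
        Real.sqrt (eigsDesc (Fᵀ * X * F) j) ≤ Real.sqrt (eigsDesc (Fᵀ * Xh * F) j)) := by
  have hsim : ∀ Y : Matrix (Fin n) (Fin n) ℝ, F⁻¹ * (P * Y) * F = Fᵀ * Y * F := fun Y => by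
    simp only [hPF, ← mul_assoc, nonsing_inv_mul _ ((isUnit_iff_isUnit_det _).mp hF), one_mul]
  have hX : X.PosSemidef := .of_lyapunov hstab (isHermitian_iff_isSymm.mpr hXsym) <| by
    rw [neg_eq_of_add_eq_zero_right hXLyap]
    exact posSemidef_conjTranspose_mul_self L
  have hFXF : (Fᵀ * X * F).PosSemidef := by simpa using hX.conjTranspose_mul_mul_same F
  have hdiff : (Fᵀ * Xh * F - Fᵀ * X * F).PosSemidef := by
    simpa [Matrix.mul_sub, Matrix.sub_mul] using hle.conjTranspose_mul_mul_same F
  refine ⟨⟨hsim X, hsim Xh⟩, fun j => ?_⟩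
  have hmono := eigsDesc_le_eigsDesc_of_posSemidef_sub hFXF.1 hdiff j
  exact ⟨eigsDesc_nonneg hFXF j, hmono, Real.sqrt_le_sqrt hmono⟩

/-- Theorem 3.5: the minimal KYP solution yields the spectral factor with smallest Hankel
singular values. Here `P = FFᵀ` is the (common) controllability Gramian, and `X`, `X̂` are
the observability Gramians of the two spectral factors, with `X ≤ X̂`. Then `PX` and `PX̂`
are similar to the symmetric matrices `FᵀXF` and `FᵀX̂F`, whose decreasingly ordered
eigenvalues are nonnegative and compare entrywise; consequently the Hankel singular values
`σ_j = √(λ_j(PX))` compare as well. -/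
theorem hankel_singular_values_minimal_solution {n m k kh : ℕ}
    (A : Matrix (Fin n) (Fin n) ℝ) (B : Matrix (Fin n) (Fin m) ℝ)
    (L : Matrix (Fin k) (Fin n) ℝ) (Lh : Matrix (Fin kh) (Fin n) ℝ)
    (P F X Xh : Matrix (Fin n) (Fin n) ℝ)
    (hstab : ∀ μ ∈ spectrum ℂ (A.map Complex.ofReal), μ.re < 0)
    (hP : P.PosDef) (hPLyap : A * P + P * Aᵀ + B * Bᵀ = 0)
    (hPF : P = F * Fᵀ) (hF : IsUnit F)
    (hXsym : Xᵀ = X) (hXhsym : Xhᵀ = Xh)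
    (hXLyap : Aᵀ * X + X * A + Lᵀ * L = 0)
    (hXhLyap : Aᵀ * Xh + Xh * A + Lhᵀ * Lh = 0)
    (hle : (Xh - X).PosSemidef) :
    (F⁻¹ * (P * X) * F = Fᵀ * X * F ∧ F⁻¹ * (P * Xh) * F = Fᵀ * Xh * F) ∧
      (∀ j : Fin n,
        0 ≤ eigsDesc (Fᵀ * X * F) j ∧
        eigsDesc (Fᵀ * X * F) j ≤ eigsDesc (Fᵀ * Xh * F) j ∧
        Real.sqrt (eigsDesc (Fᵀ * X * F) j) ≤ Real.sqrt (eigsDesc (Fᵀ * Xh * F) j)) :=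
  hankel_singular_values_minimal_solution_general A L P F X Xh hstab hPF hF hXsym hXLyap hle
end

section
/- (Correction-term identity for projection-based reduced models, equation (3.4).) Let X ∈ ℝ^{n×n} be symmetric, L ∈ ℝ^{k×n}, M ∈ ℝ^{k×m} with C − BᵀX = MᵀL (the off-diagonal block of the Lur'e factorization). Let V, W ∈ ℝ^{n×r} satisfy WᵀV = I_r, and set Ã := WᵀAV, B̃ := WᵀB, L̃ := LV, M̃ := M. Let X̃ ∈ ℝ^{r×r} be symmetric with ÃᵀX̃ + X̃Ã + L̃ᵀL̃ = 0, and define C̃ := B̃ᵀX̃ + M̃ᵀL̃. Then C̃ = CV + Bᵀ(WX̃ − XV); i.e., the reduced output matrix produced by Algorithm 3 equals the Petrov–Galerkin projection CV plus the passivity-enforcing correction term Ĉ := Bᵀ(WX̃ − XV). -/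
open Matrix

theorem Matrix.transpose_mul_mul_eq_of_sub_eq {α l m n p q : Type*} [Fintype m] [Fintype n]
    [Fintype l] [Ring α] {B : Matrix n p α} {C : Matrix p m α} {X : Matrix n m α}
    {L : Matrix l m α} {M : Matrix l p α} (hLure : C - Bᵀ * X = Mᵀ * L) (V : Matrix m q α) :
    Mᵀ * (L * V) = C * V - Bᵀ * (X * V) := by
  rw [← Matrix.mul_assoc, ← hLure, Matrix.sub_mul, Matrix.mul_assoc]

theorem correction_term_identity_general {n r m k : ℕ}
    (B : Matrix (Fin n) (Fin m) ℝ) (C : Matrix (Fin m) (Fin n) ℝ)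
    (X : Matrix (Fin n) (Fin n) ℝ) (L : Matrix (Fin k) (Fin n) ℝ)
    (M : Matrix (Fin k) (Fin m) ℝ)
    (V W : Matrix (Fin n) (Fin r) ℝ) (Xt : Matrix (Fin r) (Fin r) ℝ)
    (hLure : C - Bᵀ * X = Mᵀ * L) :
    (Wᵀ * B)ᵀ * Xt + Mᵀ * (L * V) = C * V + Bᵀ * (W * Xt - X * V) := by
  rw [transpose_mul_mul_eq_of_sub_eq hLure, transpose_mul, transpose_transpose, Matrix.mul_sub,
    Matrix.mul_assoc]
  abel

/-- Correction-term identity for projection-based reduced models (equation (3.4)): the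
reduced output matrix `C̃ = B̃ᵀX̃ + M̃ᵀL̃` produced by Algorithm 3 equals the
Petrov–Galerkin projection `CV` plus the passivity-enforcing correction term
`Ĉ = Bᵀ(WX̃ - XV)`. -/
theorem correction_term_identity {n r m k : ℕ} (A : Matrix (Fin n) (Fin n) ℝ)
    (B : Matrix (Fin n) (Fin m) ℝ) (C : Matrix (Fin m) (Fin n) ℝ)
    (X : Matrix (Fin n) (Fin n) ℝ) (L : Matrix (Fin k) (Fin n) ℝ)
    (M : Matrix (Fin k) (Fin m) ℝ)
    (V W : Matrix (Fin n) (Fin r) ℝ) (Xt : Matrix (Fin r) (Fin r) ℝ)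
    (hXsym : Xᵀ = X) (hLure : C - Bᵀ * X = Mᵀ * L)
    (hWV : Wᵀ * V = 1) (hXtsym : Xtᵀ = Xt)
    (hLyap : (Wᵀ * A * V)ᵀ * Xt + Xt * (Wᵀ * A * V) + (L * V)ᵀ * (L * V) = 0) :
    (Wᵀ * B)ᵀ * Xt + Mᵀ * (L * V) = C * V + Bᵀ * (W * Xt - X * V) :=
  correction_term_identity_general B C X L M V W Xt hLure
end

section
/- (Sylvester residual identity and invariance consequence.) Let X ∈ ℝ^{n×n} satisfy AᵀX + XA + LᵀL = 0 with L ∈ ℝ^{k×n}. Let V, W ∈ ℝ^{n×r}, set Ã := WᵀAV and L̃ := LV, and let Z ∈ ℝ^{n×r} satisfy the Sylvester equation AᵀZ + ZÃ + LᵀL̃ = 0. Then the difference E := Z − XV satisfies AᵀE + EÃ + X(VWᵀ − I_n)AV = 0. In particular, if VWᵀAV = AV (e.g., if the range of V is A-invariant and WᵀV = I_r), then XV itself solves the Sylvester equation: Aᵀ(XV) + (XV)Ã + LᵀL̃ = 0. -/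
/-! Multiplying the Lyapunov equation on the right by `V` gives
`Aᵀ(XV) + (XV)Ã + LᵀL̃ = X(VÃ - AV)`, so `XV` solves the Sylvester equation up to a defect that
vanishes when `VÃ = AV`. Subtracting this from the Sylvester equation for `Z` gives the residual
identity, since `X(VWᵀ - I)AV = X(VÃ - AV)`. -/

open Matrix

namespace Matrix

variable {α m n p : Type*} [Ring α] [Fintype m] [Fintype n] [Fintype p]
  {C : Matrix m m α} {X : Matrix m n α} {A : Matrix n n α}

theorem sylvester_defect_of_eq_zero {Q : Matrix m n α} (hX : C * X + X * A + Q = 0)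
    (V : Matrix n p α) (B : Matrix p p α) :
    C * (X * V) + X * V * B + Q * V = X * (V * B - A * V) := by
  have hXV : (C * X + X * A + Q) * V = 0 := by rw [hX, Matrix.zero_mul]
  simp only [Matrix.add_mul, Matrix.mul_sub, Matrix.mul_assoc] at hXV ⊢
  rw [← sub_eq_zero, ← hXV]
  abel

theorem sylvester_sub_mul {Q : Matrix m n α} {V : Matrix n p α} {B : Matrix p p α}
    {Z : Matrix m p α} (hX : C * X + X * A + Q = 0) (hZ : C * Z + Z * B + Q * V = 0) :
    C * (Z - X * V) + (Z - X * V) * B = X * (A * V - V * B) := by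
  calc C * (Z - X * V) + (Z - X * V) * B
      = (C * Z + Z * B + Q * V) - (C * (X * V) + X * V * B + Q * V) := by
        simp only [Matrix.mul_sub, Matrix.sub_mul]
        abel
    _ = X * (A * V - V * B) := by
        rw [hZ, sylvester_defect_of_eq_zero hX, zero_sub, ← Matrix.mul_neg, neg_sub]

end Matrix

/-- Sylvester residual identity and invariance consequence: if `AᵀX + XA + LᵀL = 0` and
`Z` solves the Sylvester equation `AᵀZ + ZÃ + LᵀL̃ = 0` with `Ã = WᵀAV` and `L̃ = LV`,
then `E = Z - XV` satisfies `AᵀE + EÃ + X(VWᵀ - I)AV = 0`; in particular, if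
`VWᵀAV = AV`, then `XV` itself solves the Sylvester equation. -/
theorem sylvester_residual_identity {n r k : ℕ} (A : Matrix (Fin n) (Fin n) ℝ)
    (X : Matrix (Fin n) (Fin n) ℝ) (L : Matrix (Fin k) (Fin n) ℝ)
    (V W : Matrix (Fin n) (Fin r) ℝ) (Z : Matrix (Fin n) (Fin r) ℝ)
    (hLyap : Aᵀ * X + X * A + Lᵀ * L = 0)
    (hSyl : Aᵀ * Z + Z * (Wᵀ * A * V) + Lᵀ * (L * V) = 0) :
    Aᵀ * (Z - X * V) + (Z - X * V) * (Wᵀ * A * V) +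
        X * (V * Wᵀ - 1) * (A * V) = 0 ∧
      (V * Wᵀ * A * V = A * V →
        Aᵀ * (X * V) + (X * V) * (Wᵀ * A * V) + Lᵀ * (L * V) = 0) := by
  have hProj : X * (V * Wᵀ - 1) * (A * V) = X * (V * (Wᵀ * A * V) - A * V) := by
    simp only [Matrix.mul_sub, Matrix.sub_mul, Matrix.mul_one, Matrix.mul_assoc]
  rw [← Matrix.mul_assoc Lᵀ] at hSyl ⊢
  refine ⟨?_, fun hInv => ?_⟩
  · rw [Matrix.sylvester_sub_mul hLyap hSyl, hProj, ← Matrix.mul_add, sub_add_sub_cancel, sub_self,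
      Matrix.mul_zero]
  · rw [Matrix.sylvester_defect_of_eq_zero hLyap, ← Matrix.mul_assoc, ← Matrix.mul_assoc, hInv,
      sub_self, Matrix.mul_zero]
end

section
/- (L² error estimate for the contractive (bounded real) reduced model.) Let Z, Ẑ : ℝ → ℂ^{m×m} be functions such that for every ω ∈ ℝ the matrices I_m − Z(ω) and I_m − Ẑ(ω) are invertible, and define G(ω) := (I_m − Z(ω))⁻¹(I_m + Z(ω)) and Ĝ(ω) := (I_m − Ẑ(ω))⁻¹(I_m + Ẑ(ω)). Assume c₁ := sup_{ω∈ℝ} ‖I_m − Ẑ(ω)‖₂ < ∞ and c₂ := sup_{ω∈ℝ} ‖I_m − Z(ω)‖₂ < ∞, and that ω ↦ ‖G(ω) − Ĝ(ω)‖_F² is Lebesgue integrable. Then ω ↦ ‖Z(ω) − Ẑ(ω)‖_F² is integrable and (∫_ℝ ‖Z(ω) − Ẑ(ω)‖_F² dω)^{1/2} ≤ (1/2) · c₁ · c₂ · (∫_ℝ ‖G(ω) − Ĝ(ω)‖_F² dω)^{1/2}, where ‖·‖_F is the Frobenius norm and ‖·‖₂ the spectral norm. -/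
open Matrix MeasureTheory

/-- The squared Frobenius norm of a complex matrix. -/
noncomputable def frobSq {a b : ℕ} (M : Matrix (Fin a) (Fin b) ℂ) : ℝ :=
  ∑ i, ∑ j, ‖M i j‖ ^ 2

/-- The spectral (operator 2-) norm of a complex matrix. -/
noncomputable def specNorm {a b : ℕ} (M : Matrix (Fin a) (Fin b) ℂ) : ℝ :=
  ‖LinearMap.toContinuousLinearMap (Matrix.toEuclideanLin M)‖

/-! Since `1 - x` and `1 + x` commute, the Moebius transformation `(1 - x)⁻¹ (1 + x)` can be
undone by multiplying with `1 - x` on either side; this yields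
`2 (x - y) = (1 - y) (moebius x - moebius y) (1 - x)`, and the theorem follows by estimating the
right-hand side pointwise with `‖A D C‖_F ≤ ‖A‖₂ ‖D‖_F ‖C‖₂` and integrating. -/

section Moebius

variable {R : Type*} [Ring R]

noncomputable def moebius (x : R) : R :=
  Ring.inverse (1 - x) * (1 + x)

theorem moebius_mul_one_sub {x : R} (hx : IsUnit (1 - x)) :
    moebius x * (1 - x) = 1 + x := by
  have hcomm : (1 + x) * (1 - x) = (1 - x) * (1 + x) := by noncomm_ring
  rw [moebius, mul_assoc, hcomm, ← mul_assoc, Ring.inverse_mul_cancel _ hx, one_mul]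

theorem one_sub_mul_moebius {x : R} (hx : IsUnit (1 - x)) :
    (1 - x) * moebius x = 1 + x := by
  rw [moebius, ← mul_assoc, Ring.mul_inverse_cancel _ hx, one_mul]

theorem two_mul_sub_eq_mul_moebius_sub_mul {x y : R} (hx : IsUnit (1 - x))
    (hy : IsUnit (1 - y)) :
    2 * (x - y) = (1 - y) * (moebius x - moebius y) * (1 - x) := by
  calc 2 * (x - y) = (1 - y) * (1 + x) - (1 + y) * (1 - x) := by noncomm_ring
    _ = (1 - y) * (moebius x * (1 - x)) - (1 - y) * moebius y * (1 - x) := by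
      rw [moebius_mul_one_sub hx, one_sub_mul_moebius hy]
    _ = (1 - y) * (moebius x - moebius y) * (1 - x) := by noncomm_ring

end Moebius

theorem moebius_eq_nonsing_inv_mul {n R : Type*} [Fintype n] [DecidableEq n] [CommRing R]
    (A : Matrix n n R) : moebius A = (1 - A)⁻¹ * (1 + A) := by
  rw [moebius, nonsing_inv_eq_ringInverse]

section Norms

variable {a b c : ℕ}

theorem frobSq_nonneg (M : Matrix (Fin a) (Fin b) ℂ) : 0 ≤ frobSq M := by
  unfold frobSq; positivity

theorem specNorm_nonneg (M : Matrix (Fin a) (Fin b) ℂ) : 0 ≤ specNorm M :=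
  norm_nonneg _

theorem frobSq_smul (z : ℂ) (M : Matrix (Fin a) (Fin b) ℂ) :
    frobSq (z • M) = ‖z‖ ^ 2 * frobSq M := by
  simp only [frobSq, Matrix.smul_apply, smul_eq_mul, norm_mul, mul_pow, Finset.mul_sum]

theorem frobSq_conjTranspose (M : Matrix (Fin a) (Fin b) ℂ) : frobSq Mᴴ = frobSq M := by
  rw [frobSq, frobSq, Finset.sum_comm]
  simp only [conjTranspose_apply, norm_star]

theorem specNorm_conjTranspose (M : Matrix (Fin a) (Fin b) ℂ) : specNorm Mᴴ = specNorm M := by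
  rw [specNorm, specNorm, toEuclideanLin_conjTranspose_eq_adjoint,
    LinearMap.adjoint_toContinuousLinearMap, LinearIsometryEquiv.norm_map]

theorem frobSq_eq_sum_norm_sq_col (M : Matrix (Fin a) (Fin b) ℂ) :
    frobSq M = ∑ j, ‖WithLp.toLp 2 (fun i => M i j)‖ ^ 2 := by
  simp only [frobSq, EuclideanSpace.norm_sq_eq]
  exact Finset.sum_comm

theorem norm_mulVec_le_specNorm_mul (A : Matrix (Fin a) (Fin b) ℂ) (v : Fin b → ℂ) :
    ‖WithLp.toLp 2 (A *ᵥ v)‖ ≤ specNorm A * ‖WithLp.toLp 2 v‖ :=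
  (LinearMap.toContinuousLinearMap (toEuclideanLin A)).le_opNorm (WithLp.toLp 2 v)

theorem frobSq_mul_le_left (A : Matrix (Fin a) (Fin b) ℂ) (B : Matrix (Fin b) (Fin c) ℂ) :
    frobSq (A * B) ≤ specNorm A ^ 2 * frobSq B := by
  rw [frobSq_eq_sum_norm_sq_col, frobSq_eq_sum_norm_sq_col, Finset.mul_sum]
  refine Finset.sum_le_sum fun j _ => ?_
  rw [← mul_pow]
  exact pow_le_pow_left₀ (norm_nonneg _) (norm_mulVec_le_specNorm_mul A fun i => B i j) 2

theorem frobSq_mul_le_right (B : Matrix (Fin a) (Fin b) ℂ) (C : Matrix (Fin b) (Fin c) ℂ) :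
    frobSq (B * C) ≤ specNorm C ^ 2 * frobSq B := by
  simpa only [← conjTranspose_mul, frobSq_conjTranspose, specNorm_conjTranspose] using
    frobSq_mul_le_left Cᴴ Bᴴ

theorem frobSq_mul_mul_le {d : ℕ} (A : Matrix (Fin a) (Fin b) ℂ) (D : Matrix (Fin b) (Fin c) ℂ)
    (C : Matrix (Fin c) (Fin d) ℂ) :
    frobSq (A * D * C) ≤ (specNorm A * specNorm C) ^ 2 * frobSq D :=
  calc frobSq (A * D * C) ≤ specNorm C ^ 2 * frobSq (A * D) := frobSq_mul_le_right _ _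
    _ ≤ specNorm C ^ 2 * (specNorm A ^ 2 * frobSq D) := by
      gcongr; exact frobSq_mul_le_left _ _
    _ = (specNorm A * specNorm C) ^ 2 * frobSq D := by ring

theorem measurable_frobSq {α : Type*} [MeasurableSpace α] {M : α → Matrix (Fin a) (Fin b) ℂ}
    (hM : ∀ i j, Measurable fun x => M x i j) : Measurable fun x => frobSq (M x) :=
  Finset.measurable_sum _ fun i _ => Finset.measurable_sum _ fun j _ =>
    ((hM i j).norm).pow_const 2

end Norms

theorem frobSq_sub_le_of_specNorm_le {m : ℕ} {A B : Matrix (Fin m) (Fin m) ℂ}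
    (hA : IsUnit (1 - A)) (hB : IsUnit (1 - B)) {c₁ c₂ : ℝ}
    (h₁ : specNorm (1 - B) ≤ c₁) (h₂ : specNorm (1 - A) ≤ c₂) :
    frobSq (A - B) ≤ (1 / 2 * c₁ * c₂) ^ 2 * frobSq (moebius A - moebius B) := by
  set D := moebius A - moebius B
  have hc : (specNorm (1 - B) * specNorm (1 - A)) ^ 2 ≤ (c₁ * c₂) ^ 2 :=
    pow_le_pow_left₀ (mul_nonneg (specNorm_nonneg _) (specNorm_nonneg _))
      (mul_le_mul h₁ h₂ (specNorm_nonneg _) ((specNorm_nonneg _).trans h₁)) 2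
  have h4 : 4 * frobSq (A - B) ≤ (c₁ * c₂) ^ 2 * frobSq D :=
    calc 4 * frobSq (A - B) = frobSq ((1 - B) * D * (1 - A)) := by
          rw [← two_mul_sub_eq_mul_moebius_sub_mul hA hB, two_mul, ← two_smul ℂ, frobSq_smul]
          norm_num
      _ ≤ (specNorm (1 - B) * specNorm (1 - A)) ^ 2 * frobSq D := frobSq_mul_mul_le _ _ _
      _ ≤ (c₁ * c₂) ^ 2 * frobSq D := mul_le_mul_of_nonneg_right hc (frobSq_nonneg D)
  linarith [show (1 / 2 * c₁ * c₂) ^ 2 = (c₁ * c₂) ^ 2 / 4 by ring]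

theorem integrable_and_sqrt_integral_le_of_le_sq_mul {α : Type*} [MeasurableSpace α]
    {μ : Measure α} {f g : α → ℝ} {K : ℝ} (hK : 0 ≤ K) (hf : AEStronglyMeasurable f μ)
    (hf₀ : ∀ x, 0 ≤ f x) (hfg : ∀ x, f x ≤ K ^ 2 * g x) (hg : Integrable g μ) :
    Integrable f μ ∧ √(∫ x, f x ∂μ) ≤ K * √(∫ x, g x ∂μ) := by
  have hKg : Integrable (fun x => K ^ 2 * g x) μ := hg.const_mul _
  have hfi : Integrable f μ :=
    hKg.mono' hf (Filter.Eventually.of_forall fun x => by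
      rw [Real.norm_of_nonneg (hf₀ x)]; exact hfg x)
  refine ⟨hfi, ?_⟩
  calc √(∫ x, f x ∂μ) ≤ √(K ^ 2 * ∫ x, g x ∂μ) := by
        rw [← integral_const_mul]; exact Real.sqrt_le_sqrt (integral_mono hfi hKg hfg)
    _ = K * √(∫ x, g x ∂μ) := by rw [Real.sqrt_mul (sq_nonneg K), Real.sqrt_sq hK]

/-- L² error estimate for the contractive (bounded real) reduced model:
`‖Z - Ẑ‖_{L²} ≤ ½ (sup‖I - Ẑ‖₂)(sup‖I - Z‖₂) ‖G - Ĝ‖_{L²}` for the Moebius-transformed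
functions `G = (I - Z)⁻¹(I + Z)` and `Ĝ = (I - Ẑ)⁻¹(I + Ẑ)`. -/
theorem l2_error_bounded_real {m : ℕ} (Z Zh : ℝ → Matrix (Fin m) (Fin m) ℂ)
    (hmeasZ : ∀ i j, Measurable fun ω => Z ω i j)
    (hmeasZh : ∀ i j, Measurable fun ω => Zh ω i j)
    (hinvZ : ∀ ω : ℝ, IsUnit (1 - Z ω)) (hinvZh : ∀ ω : ℝ, IsUnit (1 - Zh ω))
    (hbdd1 : BddAbove (Set.range fun ω : ℝ => specNorm (1 - Zh ω)))
    (hbdd2 : BddAbove (Set.range fun ω : ℝ => specNorm (1 - Z ω)))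
    (hint : Integrable (fun ω : ℝ =>
      frobSq ((1 - Z ω)⁻¹ * (1 + Z ω) - (1 - Zh ω)⁻¹ * (1 + Zh ω)))) :
    Integrable (fun ω : ℝ => frobSq (Z ω - Zh ω)) ∧
      Real.sqrt (∫ ω : ℝ, frobSq (Z ω - Zh ω)) ≤
        (1 / 2) * (⨆ ω : ℝ, specNorm (1 - Zh ω)) * (⨆ ω : ℝ, specNorm (1 - Z ω)) *
          Real.sqrt (∫ ω : ℝ, frobSq ((1 - Z ω)⁻¹ * (1 + Z ω) -
            (1 - Zh ω)⁻¹ * (1 + Zh ω))) := by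
  have hc₁ : 0 ≤ ⨆ ω : ℝ, specNorm (1 - Zh ω) := Real.iSup_nonneg fun _ => specNorm_nonneg _
  have hc₂ : 0 ≤ ⨆ ω : ℝ, specNorm (1 - Z ω) := Real.iSup_nonneg fun _ => specNorm_nonneg _
  simp only [← moebius_eq_nonsing_inv_mul] at hint ⊢
  refine integrable_and_sqrt_integral_le_of_le_sq_mul (by positivity)
    (measurable_frobSq fun i j => (hmeasZ i j).sub (hmeasZh i j)).aestronglyMeasurable
    (fun ω => frobSq_nonneg _) (fun ω => ?_) hint
  exact frobSq_sub_le_of_specNorm_le (hinvZ ω) (hinvZh ω) (le_ciSup hbdd1 ω) (le_ciSup hbdd2 ω)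
end
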